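/- For the ODE y⁽⁷⁾ = F with F = 7·u·s/r + (49/10)·t²/r − 28·t·s²/r² + (35/2)·s⁴/r³ (with r = y⁽³⁾, s = y⁽⁴⁾, t = y⁽⁵⁾, u = y⁽⁶⁾), both the τ₂-condition 21𝒟F₆₆ + 14F₆₅ + 15F₆F₆₆ = 0 and the τ₃-condition F₆₆ = 0 hold identically on r ≠ 0. -/

import Mathlib

/-- Partial derivative of G : ℝ⁸ → ℝ in the i-th coordinate. Coordinates:
z 0 = x, z (k+1) = y⁽ᵏ⁾ for k = 0,…,6. -/
noncomputable def pd (i : Fin 8) (G : (Fin 8 → ℝ) → ℝ) : (Fin 8 → ℝ) → ℝ :=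
  fun z => fderiv ℝ G z (Pi.single i 1)

/-- The total derivative 𝒟 = ∂ₓ + Σ_{k=1}^{6} y⁽ᵏ⁾ ∂/∂y⁽ᵏ⁻¹⁾ + F ∂/∂y⁽⁶⁾ along
solutions of y⁽⁷⁾ = F. -/
noncomputable def Dt (F G : (Fin 8 → ℝ) → ℝ) : (Fin 8 → ℝ) → ℝ := fun z =>
  pd 0 G z + z 2 * pd 1 G z + z 3 * pd 2 G z + z 4 * pd 3 G z + z 5 * pd 4 G z +
    z 6 * pd 5 G z + z 7 * pd 6 G z + F z * pd 7 G z

open Fin.NatCast in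
/-- Fₖ = ∂F/∂y⁽ᵏ⁾. -/
noncomputable def Fp (k : ℕ) (F : (Fin 8 → ℝ) → ℝ) : (Fin 8 → ℝ) → ℝ :=
  pd (k + 1 : ℕ) F

local notation "FF" => (fun z : Fin 8 → ℝ =>
  7 * z 7 * z 5 / z 4 + 49 / 10 * (z 6) ^ 2 / z 4 - 28 * z 6 * (z 5) ^ 2 / (z 4) ^ 2 +
    35 / 2 * (z 5) ^ 4 / (z 4) ^ 3)

lemma pd7FF (z : Fin 8 → ℝ) (hz : z 4 ≠ 0) : pd 7 FF z = 7 * z 5 / z 4 := by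
  have h4 := hasFDerivAt_apply (𝕜 := ℝ) (4 : Fin 8) z
  have h5 := hasFDerivAt_apply (𝕜 := ℝ) (5 : Fin 8) z
  have h6 := hasFDerivAt_apply (𝕜 := ℝ) (6 : Fin 8) z
  have h7 := hasFDerivAt_apply (𝕜 := ℝ) (7 : Fin 8) z
  have hinv1 := (hasDerivAt_inv hz).comp_hasFDerivAt z h4
  have hinv2 := (hasDerivAt_inv (mul_ne_zero hz hz)).comp_hasFDerivAt z (h4.mul h4)
  have hinv3 := (hasDerivAt_inv (mul_ne_zero (mul_ne_zero hz hz) hz)).comp_hasFDerivAt z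
    ((h4.mul h4).mul h4)
  have t1 := ((h7.const_mul (7:ℝ)).mul h5).mul hinv1
  have t2 := ((h6.mul h6).const_mul ((49:ℝ)/10)).mul hinv1
  have t3 := ((h6.const_mul (28:ℝ)).mul (h5.mul h5)).mul hinv2
  have t4 := (((h5.mul h5).mul (h5.mul h5)).const_mul ((35:ℝ)/2)).mul hinv3
  have hF := ((t1.add t2).sub t3).add t4
  have hE : (fun z : Fin 8 → ℝ =>
      7 * z 7 * z 5 / z 4 + 49 / 10 * (z 6) ^ 2 / z 4 - 28 * z 6 * (z 5) ^ 2 / (z 4) ^ 2 +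
        35 / 2 * (z 5) ^ 4 / (z 4) ^ 3) =ᶠ[nhds z]
      (fun x : Fin 8 → ℝ =>
        7 * x 7 * x 5 * (x 4)⁻¹ + 49 / 10 * (x 6 * x 6) * (x 4)⁻¹ -
          28 * x 6 * (x 5 * x 5) * (x 4 * x 4)⁻¹ +
          35 / 2 * (x 5 * x 5 * (x 5 * x 5)) * (x 4 * x 4 * x 4)⁻¹) :=
    Filter.Eventually.of_forall fun w => by simp only [div_eq_mul_inv]; ring
  have hF' := hF.congr_of_eventuallyEq hE
  show fderiv ℝ FF z (Pi.single 7 1) = 7 * z 5 / z 4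
  rw [hF'.fderiv]
  simp [ContinuousLinearMap.proj_apply, Pi.single_apply, smul_eq_mul]
  ring

lemma hgFF (z : Fin 8 → ℝ) (hz : z 4 ≠ 0) :
    HasFDerivAt (fun w : Fin 8 → ℝ => 7 * w 5 / w 4)
      ((7 * z 5) • -(z 4 ^ 2)⁻¹ • (ContinuousLinearMap.proj 4 : (Fin 8 → ℝ) →L[ℝ] ℝ) +
        (z 4)⁻¹ • (7:ℝ) • (ContinuousLinearMap.proj 5 : (Fin 8 → ℝ) →L[ℝ] ℝ)) z := by
  have h4 := hasFDerivAt_apply (𝕜 := ℝ) (4 : Fin 8) z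
  have h5 := hasFDerivAt_apply (𝕜 := ℝ) (5 : Fin 8) z
  have hinv1 := (hasDerivAt_inv hz).comp_hasFDerivAt z h4
  have hg := (h5.const_mul (7:ℝ)).mul hinv1
  exact hg.congr_of_eventuallyEq
    (Filter.Eventually.of_forall fun w => by simp only [div_eq_mul_inv, Function.comp_apply, Pi.mul_apply])

lemma pd7pd7FF (z : Fin 8 → ℝ) (hz : z 4 ≠ 0) : pd 7 (pd 7 FF) z = 0 := by
  have hopen : IsOpen {w : Fin 8 → ℝ | w 4 ≠ 0} :=
    IsOpen.preimage (continuous_apply 4) isOpen_ne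
  have heq : pd 7 FF =ᶠ[nhds z] (fun w : Fin 8 → ℝ => 7 * w 5 / w 4) :=
    Filter.eventuallyEq_of_mem (hopen.mem_nhds hz) (fun w hw => pd7FF w hw)
  show fderiv ℝ (pd 7 FF) z (Pi.single 7 1) = 0
  rw [heq.fderiv_eq, (hgFF z hz).fderiv]
  simp [ContinuousLinearMap.proj_apply, Pi.single_apply]

lemma pd6pd7FF (z : Fin 8 → ℝ) (hz : z 4 ≠ 0) : pd 6 (pd 7 FF) z = 0 := by
  have hopen : IsOpen {w : Fin 8 → ℝ | w 4 ≠ 0} :=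
    IsOpen.preimage (continuous_apply 4) isOpen_ne
  have heq : pd 7 FF =ᶠ[nhds z] (fun w : Fin 8 → ℝ => 7 * w 5 / w 4) :=
    Filter.eventuallyEq_of_mem (hopen.mem_nhds hz) (fun w hw => pd7FF w hw)
  show fderiv ℝ (pd 7 FF) z (Pi.single 6 1) = 0
  rw [heq.fderiv_eq, (hgFF z hz).fderiv]
  simp [ContinuousLinearMap.proj_apply, Pi.single_apply]

lemma pdG (i : Fin 8) (z : Fin 8 → ℝ) (hz : z 4 ≠ 0) : pd i (pd 7 (pd 7 FF)) z = 0 := by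
  have hopen : IsOpen {w : Fin 8 → ℝ | w 4 ≠ 0} :=
    IsOpen.preimage (continuous_apply 4) isOpen_ne
  have heq : pd 7 (pd 7 FF) =ᶠ[nhds z] (fun _ : Fin 8 → ℝ => (0:ℝ)) :=
    Filter.eventuallyEq_of_mem (hopen.mem_nhds hz) (fun w hw => pd7pd7FF w hw)
  show fderiv ℝ (pd 7 (pd 7 FF)) z (Pi.single i 1) = 0
  rw [heq.fderiv_eq]
  simp

/-- For F = 7us/r + (49/10)t²/r − 28ts²/r² + (35/2)s⁴/r³ (r = y⁽³⁾, s = y⁽⁴⁾,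
t = y⁽⁵⁾, u = y⁽⁶⁾), both the τ₃-condition F₆₆ = 0 and the τ₂-condition
21𝒟F₆₆ + 14F₆₅ + 15F₆F₆₆ = 0 hold identically on r ≠ 0. -/
theorem stmt_16 :
    ∀ z : Fin 8 → ℝ, z 4 ≠ 0 →
      pd 7 (pd 7 (fun z : Fin 8 → ℝ =>
          7 * z 7 * z 5 / z 4 + 49 / 10 * (z 6) ^ 2 / z 4 - 28 * z 6 * (z 5) ^ 2 / (z 4) ^ 2 +
            35 / 2 * (z 5) ^ 4 / (z 4) ^ 3)) z = 0 ∧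
      21 * Dt (fun z : Fin 8 → ℝ =>
            7 * z 7 * z 5 / z 4 + 49 / 10 * (z 6) ^ 2 / z 4 - 28 * z 6 * (z 5) ^ 2 / (z 4) ^ 2 +
              35 / 2 * (z 5) ^ 4 / (z 4) ^ 3)
          (pd 7 (pd 7 (fun z : Fin 8 → ℝ =>
            7 * z 7 * z 5 / z 4 + 49 / 10 * (z 6) ^ 2 / z 4 - 28 * z 6 * (z 5) ^ 2 / (z 4) ^ 2 +
              35 / 2 * (z 5) ^ 4 / (z 4) ^ 3))) z +
        14 * pd 6 (pd 7 (fun z : Fin 8 → ℝ =>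
            7 * z 7 * z 5 / z 4 + 49 / 10 * (z 6) ^ 2 / z 4 - 28 * z 6 * (z 5) ^ 2 / (z 4) ^ 2 +
              35 / 2 * (z 5) ^ 4 / (z 4) ^ 3)) z +
        15 * pd 7 (fun z : Fin 8 → ℝ =>
            7 * z 7 * z 5 / z 4 + 49 / 10 * (z 6) ^ 2 / z 4 - 28 * z 6 * (z 5) ^ 2 / (z 4) ^ 2 +
              35 / 2 * (z 5) ^ 4 / (z 4) ^ 3) z *
          pd 7 (pd 7 (fun z : Fin 8 → ℝ =>
            7 * z 7 * z 5 / z 4 + 49 / 10 * (z 6) ^ 2 / z 4 - 28 * z 6 * (z 5) ^ 2 / (z 4) ^ 2 +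
              35 / 2 * (z 5) ^ 4 / (z 4) ^ 3)) z = 0 := by
  intro z hz
  refine ⟨pd7pd7FF z hz, ?_⟩
  rw [pd7pd7FF z hz, pd6pd7FF z hz]
  have hD : Dt FF (pd 7 (pd 7 FF)) z = 0 := by
    unfold Dt
    rw [pdG 0 z hz, pdG 1 z hz, pdG 2 z hz, pdG 3 z hz, pdG 4 z hz, pdG 5 z hz,
      pdG 6 z hz, pdG 7 z hz]
    ring
  rw [hD]
  ring
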